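/- arXiv:1912.12641 — 4 statements merged into one kernel-verified Lean document; each statement's English description precedes it below -/
import Mathlib

section
/- Let $K \le k$ be real numbers and define the Wronskian $W(r) = \sin_K'(r)\,\sin_k(r) - \sin_K(r)\,\sin_k'(r)$. Then $W(r) \ge 0$ for every $r \ge 0$ with $r \le \pi/\sqrt{k}$ in case $k > 0$ (and for all $r \ge 0$ if $k \le 0$). -/
open Real MeasureTheory Set Filter

/-- The generalized sine function `sin_m`. -/
noncomputable def sinm (m r : ℝ) : ℝ :=
  if 0 < m then Real.sin (Real.sqrt m * r) / Real.sqrt m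
  else if m = 0 then r
  else Real.sinh (Real.sqrt (-m) * r) / Real.sqrt (-m)

/-- The derivative `sin_m'` of the generalized sine function. -/
noncomputable def sinm' (m r : ℝ) : ℝ :=
  if 0 < m then Real.cos (Real.sqrt m * r)
  else if m = 0 then 1
  else Real.cosh (Real.sqrt (-m) * r)

/-!
The Wronskian `W = sin_K' sin_k - sin_K sin_k'` vanishes at `0`, and since both functions solve
`y'' = -m y` for their own `m`, its derivative is `W' = (k - K) sin_K sin_k`. On `[0, π/√k]` both
sines are nonnegative (`sin_K` has no zero before `π/√K ≥ π/√k`), so `W` is nondecreasing there and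
stays nonnegative.
-/

@[simp]
lemma sinm_zero (m : ℝ) : sinm m 0 = 0 := by
  unfold sinm; split_ifs <;> simp

lemma hasDerivAt_sinm (m r : ℝ) : HasDerivAt (sinm m) (sinm' m r) r := by
  unfold sinm sinm'
  split_ifs with hpos
  · have hs : Real.sqrt m ≠ 0 := by positivity
    have h := ((Real.hasDerivAt_sin (Real.sqrt m * r)).comp r
      ((hasDerivAt_id r).const_mul (Real.sqrt m))).div_const (Real.sqrt m)
    simpa [mul_div_assoc, hs] using h
  · exact hasDerivAt_id' r
  · have hs : Real.sqrt (-m) ≠ 0 := Real.sqrt_ne_zero'.2 (by grind)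
    have h := ((Real.hasDerivAt_sinh (Real.sqrt (-m) * r)).comp r
      ((hasDerivAt_id r).const_mul (Real.sqrt (-m)))).div_const (Real.sqrt (-m))
    simpa [mul_div_assoc, hs] using h

lemma hasDerivAt_sinm' (m r : ℝ) : HasDerivAt (sinm' m) (-m * sinm m r) r := by
  unfold sinm sinm'
  split_ifs with hpos hzero
  · have hs : Real.sqrt m ≠ 0 := by positivity
    refine ((Real.hasDerivAt_cos (Real.sqrt m * r)).comp r
      ((hasDerivAt_id r).const_mul (Real.sqrt m))).congr_deriv ?_
    field_simp
    rw [Real.sq_sqrt hpos.le]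
    ring
  · simpa [hzero] using hasDerivAt_const r (1 : ℝ)
  · have hneg : 0 < -m := by grind
    have hs : Real.sqrt (-m) ≠ 0 := by positivity
    refine ((Real.hasDerivAt_cosh (Real.sqrt (-m) * r)).comp r
      ((hasDerivAt_id r).const_mul (Real.sqrt (-m)))).congr_deriv ?_
    field_simp
    rw [Real.sq_sqrt hneg.le]
    ring

lemma sinm_nonneg (m r : ℝ) (hr : 0 ≤ r) (hπ : 0 < m → Real.sqrt m * r ≤ π) : 0 ≤ sinm m r := by
  unfold sinm
  split_ifs with hpos
  · exact div_nonneg (Real.sin_nonneg_of_nonneg_of_le_pi (by positivity) (hπ hpos))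
      (Real.sqrt_nonneg m)
  · exact hr
  · exact div_nonneg (Real.sinh_nonneg_iff.2 (by positivity)) (Real.sqrt_nonneg _)

lemma sinm_nonneg_of_le_pi_div_sqrt {m k r : ℝ} (hmk : m ≤ k) (hr : 0 ≤ r)
    (hrk : 0 < k → r ≤ π / Real.sqrt k) : 0 ≤ sinm m r := by
  refine sinm_nonneg m r hr fun hm => ?_
  have hk : 0 < k := hm.trans_le hmk
  calc Real.sqrt m * r ≤ Real.sqrt k * r := by gcongr
    _ ≤ Real.sqrt k * (π / Real.sqrt k) := by gcongr; exact hrk hk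
    _ = π := mul_div_cancel₀ π (by positivity)

noncomputable def wronskian (K k r : ℝ) : ℝ :=
  sinm' K r * sinm k r - sinm K r * sinm' k r

lemma wronskian_zero_right (K k : ℝ) : wronskian K k 0 = 0 := by
  simp [wronskian]

lemma hasDerivAt_wronskian (K k r : ℝ) :
    HasDerivAt (wronskian K k) ((k - K) * (sinm K r * sinm k r)) r := by
  refine (((hasDerivAt_sinm' K r).mul (hasDerivAt_sinm k r)).sub
    ((hasDerivAt_sinm K r).mul (hasDerivAt_sinm' k r))).congr_deriv ?_
  ring

lemma monotoneOn_wronskian {K k r : ℝ} (hKk : K ≤ k) (hrk : 0 < k → r ≤ π / Real.sqrt k) :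
    MonotoneOn (wronskian K k) (Icc 0 r) := by
  refine monotoneOn_of_hasDerivWithinAt_nonneg (convex_Icc 0 r)
    (fun x _ => (hasDerivAt_wronskian K k x).continuousAt.continuousWithinAt)
    (fun x _ => (hasDerivAt_wronskian K k x).hasDerivWithinAt) fun x hx => ?_
  rw [interior_Icc] at hx
  have hxk : 0 < k → x ≤ π / Real.sqrt k := fun hk => hx.2.le.trans (hrk hk)
  exact mul_nonneg (sub_nonneg.2 hKk) (mul_nonneg
    (sinm_nonneg_of_le_pi_div_sqrt hKk hx.1.le hxk)
    (sinm_nonneg_of_le_pi_div_sqrt le_rfl hx.1.le hxk))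

/-- For `K ≤ k`, the Wronskian `W(r) = sin_K'(r) sin_k(r) - sin_K(r) sin_k'(r)`
is nonnegative for all `r ≥ 0` (with `r ≤ π/√k` when `k > 0`). -/
theorem wronskian_nonneg (K k : ℝ) (hKk : K ≤ k) (r : ℝ) (hr : 0 ≤ r)
    (hrk : 0 < k → r ≤ Real.pi / Real.sqrt k) :
    0 ≤ sinm' K r * sinm k r - sinm K r * sinm' k r := by
  have h := monotoneOn_wronskian hKk hrk (left_mem_Icc.2 hr) (right_mem_Icc.2 hr) hr
  rw [wronskian_zero_right] at h
  exact h
end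

section
/- Let $0 < a \le b$ be real numbers. Then the function $r \mapsto \dfrac{\sin(a r)}{\sin(b r)}$ is monotone nondecreasing on the interval $(0, \pi/b)$. -/
/-!
The derivative of `sin (a r) / sin (b r)` has the sign of
`a r · cot (a r) - b r · cot (b r)`, so it suffices that `t ↦ t cot t` is antitone on `(0, π)`.
Its derivative is `(sin t cos t - t) / sin² t`, which is nonpositive because
`sin t cos t = sin (2t) / 2 < t`.
-/

open Real Set

lemma hasDerivAt_mul_cos_div_sin {t : ℝ} (ht : sin t ≠ 0) :
    HasDerivAt (fun t => t * cos t / sin t) ((sin t * cos t - t) / sin t ^ 2) t := by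
  have h := ((hasDerivAt_id' t).fun_mul (hasDerivAt_cos t)).fun_div (hasDerivAt_sin t) ht
  exact h.congr_deriv (by linear_combination (-t / sin t ^ 2) * sin_sq_add_cos_sq t)

lemma sin_mul_cos_le_self {t : ℝ} (ht : 0 ≤ t) : sin t * cos t ≤ t := by
  have h := sin_le (by positivity : 0 ≤ 2 * t)
  rw [sin_two_mul] at h
  linarith

lemma antitoneOn_mul_cos_div_sin : AntitoneOn (fun t => t * cos t / sin t) (Ioo 0 π) := by
  have hderiv (t : ℝ) (ht : t ∈ Ioo 0 π) := hasDerivAt_mul_cos_div_sin (sin_pos_of_mem_Ioo ht).ne'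
  refine antitoneOn_of_hasDerivWithinAt_nonpos (convex_Ioo 0 π)
    (fun t ht => (hderiv t ht).continuousAt.continuousWithinAt)
    (fun t ht => (hderiv t (interior_subset ht)).hasDerivWithinAt) fun t ht => ?_
  rw [interior_Ioo] at ht
  exact div_nonpos_of_nonpos_of_nonneg (sub_nonpos.2 (sin_mul_cos_le_self ht.1.le)) (sq_nonneg _)

lemma mul_cos_mul_sin_le_mul_cos_mul_sin {x y : ℝ} (hx : 0 < x) (hxy : x ≤ y) (hy : y < π) :
    y * cos y * sin x ≤ x * cos x * sin y := by
  have h := antitoneOn_mul_cos_div_sin ⟨hx, hxy.trans_lt hy⟩ ⟨hx.trans_le hxy, hy⟩ hxy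
  simp only at h
  rwa [div_le_div_iff₀ (sin_pos_of_pos_of_lt_pi (hx.trans_le hxy) hy)
    (sin_pos_of_pos_of_lt_pi hx (hxy.trans_lt hy))] at h

/-- For `0 < a ≤ b`, the function `r ↦ sin(a r)/sin(b r)` is monotone
nondecreasing on `(0, π/b)`. -/
theorem sin_div_sin_monotone (a b : ℝ) (ha : 0 < a) (hab : a ≤ b) :
    MonotoneOn (fun r => Real.sin (a * r) / Real.sin (b * r))
      (Set.Ioo 0 (Real.pi / b)) := by
  have hb : 0 < b := ha.trans_le hab
  have hbr {r : ℝ} (hr : r ∈ Ioo 0 (π / b)) : b * r < π := (lt_div_iff₀' hb).1 hr.2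
  have hsin {r : ℝ} (hr : r ∈ Ioo 0 (π / b)) : 0 < sin (b * r) :=
    sin_pos_of_pos_of_lt_pi (mul_pos hb hr.1) (hbr hr)
  have hderiv {r : ℝ} (hr : r ∈ Ioo 0 (π / b)) :
      HasDerivAt (fun r => sin (a * r) / sin (b * r))
        ((cos (a * r) * a * sin (b * r) - sin (a * r) * (cos (b * r) * b)) / sin (b * r) ^ 2) r :=
    (((hasDerivAt_id r).const_mul a).sin.congr_deriv (by simp)).fun_div
      (((hasDerivAt_id r).const_mul b).sin.congr_deriv (by simp)) (hsin hr).ne'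
  refine monotoneOn_of_hasDerivWithinAt_nonneg (convex_Ioo _ _)
    (fun r hr => (hderiv hr).continuousAt.continuousWithinAt)
    (fun r hr => (hderiv (interior_subset hr)).hasDerivWithinAt) fun r hr => ?_
  rw [interior_Ioo] at hr
  have key := mul_cos_mul_sin_le_mul_cos_mul_sin (mul_pos ha hr.1)
    (mul_le_mul_of_nonneg_right hab hr.1.le) (hbr hr)
  refine div_nonneg (nonneg_of_mul_nonneg_right (a := r) ?_ hr.1) (sq_nonneg _)
  linarith
end

section
/- Let $a \ge b > 0$ be real numbers. Then the function $r \mapsto \dfrac{\sinh(a r)}{\sinh(b r)}$ is monotone nondecreasing on $(0, \infty)$. -/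
/-!
The derivative of `sinh (a r) / sinh (b r)` has the sign of the Wronskian-type expression
`W r = a cosh (a r) sinh (b r) - b sinh (a r) cosh (b r)`. Since `W 0 = 0` and
`W' r = (a² - b²) sinh (a r) sinh (b r) ≥ 0` for `r ≥ 0`, `W` is nonnegative on `[0, ∞)`.
-/

open Real Set

theorem hasDerivAt_sinh_const_mul (c x : ℝ) :
    HasDerivAt (fun y => sinh (c * y)) (cosh (c * x) * c) x :=
  (hasDerivAt_const_mul c).sinh

theorem hasDerivAt_cosh_const_mul (c x : ℝ) :
    HasDerivAt (fun y => cosh (c * y)) (sinh (c * x) * c) x :=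
  (hasDerivAt_const_mul c).cosh

theorem mul_sinh_mul_cosh_mul_le {a b r : ℝ} (hb : 0 ≤ b) (hab : b ≤ a) (hr : 0 ≤ r) :
    b * sinh (a * r) * cosh (b * r) ≤ a * cosh (a * r) * sinh (b * r) := by
  set W : ℝ → ℝ := fun s => a * cosh (a * s) * sinh (b * s) - b * sinh (a * s) * cosh (b * s)
  have hW' (x : ℝ) : HasDerivAt W ((a ^ 2 - b ^ 2) * (sinh (a * x) * sinh (b * x))) x := by
    refine ((((hasDerivAt_cosh_const_mul a x).const_mul a).mul (hasDerivAt_sinh_const_mul b x)).sub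
      (((hasDerivAt_sinh_const_mul a x).const_mul b).mul
        (hasDerivAt_cosh_const_mul b x))).congr_deriv ?_
    ring
  have hW_mono : MonotoneOn W (Ici 0) := by
    refine monotoneOn_of_hasDerivWithinAt_nonneg (convex_Ici 0)
      (fun x _ => (hW' x).continuousAt.continuousWithinAt)
      (fun x _ => (hW' x).hasDerivWithinAt) fun x hx => ?_
    rw [interior_Ici, mem_Ioi] at hx
    have hsq : 0 ≤ a ^ 2 - b ^ 2 := by nlinarith
    have hsinh_a : 0 ≤ sinh (a * x) := sinh_nonneg_iff.mpr (mul_nonneg (hb.trans hab) hx.le)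
    have hsinh_b : 0 ≤ sinh (b * x) := sinh_nonneg_iff.mpr (mul_nonneg hb hx.le)
    positivity
  have hW_nonneg : W 0 ≤ W r := hW_mono self_mem_Ici hr hr
  simp only [W, mul_zero, sinh_zero, cosh_zero] at hW_nonneg
  linarith

/-- For `a ≥ b > 0`, the function `r ↦ sinh(a r)/sinh(b r)` is monotone
nondecreasing on `(0, ∞)`. -/
theorem sinh_div_sinh_monotone (a b : ℝ) (hb : 0 < b) (hab : b ≤ a) :
    MonotoneOn (fun r => Real.sinh (a * r) / Real.sinh (b * r)) (Set.Ioi 0) := by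
  have hsinh_ne (r : ℝ) (hr : r ∈ Ioi (0 : ℝ)) : sinh (b * r) ≠ 0 :=
    (sinh_pos_iff.mpr (mul_pos hb hr)).ne'
  have hderiv (r : ℝ) (hr : r ∈ Ioi (0 : ℝ)) := (hasDerivAt_sinh_const_mul a r).div
    (hasDerivAt_sinh_const_mul b r) (hsinh_ne r hr)
  refine monotoneOn_of_hasDerivWithinAt_nonneg (convex_Ioi 0)
    (fun r hr => (hderiv r hr).continuousAt.continuousWithinAt)
    (fun r hr => (hderiv r (interior_subset hr)).hasDerivWithinAt) fun r hr => ?_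
  rw [interior_Ioi] at hr
  have hW := mul_sinh_mul_cosh_mul_le hb.le hab hr.le
  exact div_nonneg (by linarith) (sq_nonneg _)
end

section
/- Let $n \ge 2$ be a natural number and $K \le k$ real numbers. Let $R, R' > 0$ satisfy: $R \le \pi/\sqrt{k}$ if $k > 0$, and $R' \le \pi/\sqrt{K}$ if $K > 0$. If $\int_0^{R'} \sin_K(t)^{n-1}\, dt = \int_0^{R} \sin_k(t)^{n-1}\, dt$, then $R' \le R$. -/
open Real MeasureTheory Set Filter

/-!
Comparison of the integrands: on `[0, R]` one has `sin_k ≤ sin_K`, since `sin_m t` is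
`t` times the secant slope of the concave `sin` (for `m > 0`) or of the convex `sinh`
(for `m < 0`) through `0` and `√|m| t`, and for curvatures of opposite signs
`sin_k t ≤ t ≤ sin_K t`. Hence `∫₀^R sin_k^{n-1} ≤ ∫₀^R sin_K^{n-1}`, and
if `R < R'` the positive integral of `sin_K^{n-1}` over `(R, R')` would make the ball
`B_K(R')` strictly larger than `B_k(R)`.
-/

theorem convexOn_sinh_Ici : ConvexOn ℝ (Ici 0) sinh := by
  refine convexOn_of_deriv2_nonneg' (convex_Ici 0) differentiable_sinh.differentiableOn
    (by simpa only [Real.deriv_sinh] using differentiable_cosh.differentiableOn) fun x hx => ?_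
  simpa only [Function.iterate_succ, Function.iterate_zero, Function.comp_apply, id_eq,
    Real.deriv_sinh, Real.deriv_cosh] using sinh_nonneg_iff.2 hx

theorem ConvexOn.div_le_div_of_map_zero {s : Set ℝ} {f : ℝ → ℝ} (hf : ConvexOn ℝ s f)
    (hs : 0 ∈ s) (hf0 : f 0 = 0) {c d t : ℝ} (hc : 0 < c) (hcd : c ≤ d) (ht : 0 ≤ t)
    (hct : c * t ∈ s) (hdt : d * t ∈ s) : f (c * t) / c ≤ f (d * t) / d := by
  obtain rfl | ht := ht.eq_or_lt
  · simp [hf0]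
  have hd : 0 < d := hc.trans_le hcd
  have hslope := hf.secant_mono hs hct hdt (by positivity) (by positivity)
    (mul_le_mul_of_nonneg_right hcd ht.le)
  simp only [hf0, sub_zero] at hslope
  calc f (c * t) / c = t * (f (c * t) / (c * t)) := by field_simp
    _ ≤ t * (f (d * t) / (d * t)) := mul_le_mul_of_nonneg_left hslope ht.le
    _ = f (d * t) / d := by field_simp

theorem ConcaveOn.div_le_div_of_map_zero {s : Set ℝ} {f : ℝ → ℝ} (hf : ConcaveOn ℝ s f)
    (hs : 0 ∈ s) (hf0 : f 0 = 0) {c d t : ℝ} (hc : 0 < c) (hcd : c ≤ d) (ht : 0 ≤ t)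
    (hct : c * t ∈ s) (hdt : d * t ∈ s) : f (d * t) / d ≤ f (c * t) / c := by
  have := hf.neg.div_le_div_of_map_zero hs (by simp [hf0]) hc hcd ht hct hdt
  simpa only [Pi.neg_apply, neg_div, neg_le_neg_iff] using this

section sinm

variable {m K k t : ℝ}

theorem sinm_of_pos (hm : 0 < m) (t : ℝ) : sinm m t = sin (√m * t) / √m := if_pos hm

theorem sinm_zero_left (t : ℝ) : sinm 0 t = t := by simp [sinm]

theorem sinm_of_neg (hm : m < 0) (t : ℝ) : sinm m t = sinh (√(-m) * t) / √(-m) := by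
  simp [sinm, hm.not_gt, hm.ne]

theorem continuous_sinm (m : ℝ) : Continuous (sinm m) := by
  unfold sinm
  split_ifs
  · exact (continuous_sin.comp (continuous_const.mul continuous_id)).div_const _
  · exact continuous_id
  · exact (continuous_sinh.comp (continuous_const.mul continuous_id)).div_const _

theorem sinm_nonneg_s10 (ht : 0 ≤ t) (hm : 0 < m → t ≤ π / √m) : 0 ≤ sinm m t := by
  rcases lt_trichotomy m 0 with hm0 | rfl | hm0
  · rw [sinm_of_neg hm0]
    exact div_nonneg (sinh_nonneg_iff.2 (by positivity)) (sqrt_nonneg _)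
  · rwa [sinm_zero_left]
  · rw [sinm_of_pos hm0]
    refine div_nonneg (sin_nonneg_of_nonneg_of_le_pi (by positivity) ?_) (sqrt_nonneg _)
    exact (le_div_iff₀' (sqrt_pos.2 hm0)).1 (hm hm0)

theorem sinm_pos (ht : 0 < t) (hm : 0 < m → t < π / √m) : 0 < sinm m t := by
  rcases lt_trichotomy m 0 with hm0 | rfl | hm0
  · have : 0 < √(-m) := sqrt_pos.2 (neg_pos.2 hm0)
    rw [sinm_of_neg hm0]
    exact div_pos (sinh_pos_iff.2 (by positivity)) this
  · rwa [sinm_zero_left]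
  · have : 0 < √m := sqrt_pos.2 hm0
    rw [sinm_of_pos hm0]
    exact div_pos (sin_pos_of_pos_of_lt_pi (by positivity) ((lt_div_iff₀' this).1 (hm hm0))) this

theorem sinm_le_self (hm : 0 ≤ m) (ht : 0 ≤ t) : sinm m t ≤ t := by
  obtain rfl | hm := hm.eq_or_lt
  · rw [sinm_zero_left]
  have : 0 < √m := sqrt_pos.2 hm
  rw [sinm_of_pos hm, div_le_iff₀' this]
  exact sin_le (by positivity)

theorem self_le_sinm (hm : m ≤ 0) (ht : 0 ≤ t) : t ≤ sinm m t := by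
  obtain rfl | hm := hm.eq_or_lt
  · rw [sinm_zero_left]
  have : 0 < √(-m) := sqrt_pos.2 (neg_pos.2 hm)
  rw [sinm_of_neg hm, le_div_iff₀' this]
  exact self_le_sinh_iff.2 (by positivity)

theorem sinm_le_sinm_of_pos (hK : 0 < K) (hKk : K ≤ k) (ht : 0 ≤ t) (htk : t ≤ π / √k) :
    sinm k t ≤ sinm K t := by
  have hk : 0 < √k := sqrt_pos.2 (hK.trans_le hKk)
  have hKk' : √K ≤ √k := sqrt_le_sqrt hKk
  have hkt : √k * t ≤ π := (le_div_iff₀' hk).1 htk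
  rw [sinm_of_pos hK, sinm_of_pos (hK.trans_le hKk)]
  exact strictConcaveOn_sin_Icc.concaveOn.div_le_div_of_map_zero ⟨le_rfl, pi_pos.le⟩ sin_zero
    (sqrt_pos.2 hK) hKk' ht ⟨by positivity, (mul_le_mul_of_nonneg_right hKk' ht).trans hkt⟩
    ⟨by positivity, hkt⟩

theorem sinm_le_sinm_of_neg (hKk : K ≤ k) (hk : k < 0) (ht : 0 ≤ t) :
    sinm k t ≤ sinm K t := by
  rw [sinm_of_neg hk, sinm_of_neg (hKk.trans_lt hk)]
  exact convexOn_sinh_Ici.div_le_div_of_map_zero self_mem_Ici sinh_zero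
    (sqrt_pos.2 (neg_pos.2 hk)) (sqrt_le_sqrt (neg_le_neg hKk)) ht
    (mem_Ici.2 (by positivity)) (mem_Ici.2 (by positivity))

theorem sinm_le_sinm (hKk : K ≤ k) (ht : 0 ≤ t) (hk : 0 < k → t ≤ π / √k) :
    sinm k t ≤ sinm K t := by
  rcases lt_or_ge 0 K with hK | hK
  · exact sinm_le_sinm_of_pos hK hKk ht (hk (hK.trans_le hKk))
  rcases lt_or_ge k 0 with hk0 | hk0
  · exact sinm_le_sinm_of_neg hKk hk0 ht
  · exact (sinm_le_self hk0 ht).trans (self_le_sinm hK ht)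

end sinm

noncomputable def ballVolume (n : ℕ) (m r : ℝ) : ℝ :=
  ∫ t in (0 : ℝ)..r, sinm m t ^ (n - 1)

section ballVolume

variable {n : ℕ} {m K k r r' : ℝ}

theorem intervalIntegrable_sinm_pow (n : ℕ) (m a b : ℝ) :
    IntervalIntegrable (fun t => sinm m t ^ n) volume a b :=
  ((continuous_sinm m).pow n).intervalIntegrable a b

theorem ballVolume_le_ballVolume (hKk : K ≤ k) (hr : 0 ≤ r) (hk : 0 < k → r ≤ π / √k) :
    ballVolume n k r ≤ ballVolume n K r := by
  refine intervalIntegral.integral_mono_on hr (intervalIntegrable_sinm_pow _ _ _ _)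
    (intervalIntegrable_sinm_pow _ _ _ _) fun t ht => ?_
  have htk : 0 < k → t ≤ π / √k := fun hk0 => ht.2.trans (hk hk0)
  exact pow_le_pow_left₀ (sinm_nonneg_s10 ht.1 htk) (sinm_le_sinm hKk ht.1 htk) _

theorem ballVolume_lt_ballVolume (hr : 0 ≤ r) (hrr' : r < r') (hr' : 0 < m → r' ≤ π / √m) :
    ballVolume n m r < ballVolume n m r' := by
  have hshell : 0 < ∫ t in r..r', sinm m t ^ (n - 1) :=
    intervalIntegral.intervalIntegral_pos_of_pos_on (intervalIntegrable_sinm_pow _ _ _ _)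
      (fun t ht => pow_pos (sinm_pos (hr.trans_lt ht.1)
        fun hm => ht.2.trans_le (hr' hm)) _) hrr'
  rw [ballVolume, ballVolume, ← intervalIntegral.integral_add_adjacent_intervals
    (intervalIntegrable_sinm_pow _ _ _ _) (intervalIntegrable_sinm_pow _ _ r r')]
  linarith

end ballVolume

theorem radius_le_of_volume_eq_general (n : ℕ) (K k : ℝ) (hKk : K ≤ k)
    (R R' : ℝ) (hR : 0 < R)
    (hRk : 0 < k → R ≤ Real.pi / Real.sqrt k)
    (hR'K : 0 < K → R' ≤ Real.pi / Real.sqrt K)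
    (hvol : ∫ t in (0:ℝ)..R', sinm K t ^ (n - 1) = ∫ t in (0:ℝ)..R, sinm k t ^ (n - 1)) :
    R' ≤ R := by
  by_contra! hRR'
  have hvol : ballVolume n K R' = ballVolume n k R := hvol
  have := ballVolume_lt_ballVolume (n := n) hR.le hRR' hR'K
  have := ballVolume_le_ballVolume (n := n) hKk hR.le hRk
  linarith

/-- If the balls `B_K(R')` and `B_k(R)` in the `n`-dimensional space forms of
curvatures `K ≤ k` have the same volume, then `R' ≤ R`. -/
theorem radius_le_of_volume_eq (n : ℕ) (hn : 2 ≤ n) (K k : ℝ) (hKk : K ≤ k)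
    (R R' : ℝ) (hR : 0 < R) (hR' : 0 < R')
    (hRk : 0 < k → R ≤ Real.pi / Real.sqrt k)
    (hR'K : 0 < K → R' ≤ Real.pi / Real.sqrt K)
    (hvol : ∫ t in (0:ℝ)..R', sinm K t ^ (n - 1) = ∫ t in (0:ℝ)..R, sinm k t ^ (n - 1)) :
    R' ≤ R :=
  radius_le_of_volume_eq_general n K k hKk R R' hR hRk hR'K hvol
end
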